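/- Let W be a lattice, F : W → ℝ submodular, H(b, a) = F(b) − F(a). Fix a chain z₀ ⊆ z₁ ⊆ ... ⊆ zₙ in W and an element h with z₀ ⊆ h ⊆ zₙ. Suppose for each k with 1 ≤ k ≤ n, H(zₖ, (h ⊓ zₖ) ⊔ zₖ₋₁) ≤ 0. Then H(zₙ, h) ≤ 0. -/
import Mathlib


/-- Telescoping zigzag accessibility argument: given a chain `z 0 ≤ ⋯ ≤ z n`,
an element `h` with `z 0 ≤ h ≤ z n`, and nonpositive conditional entropy at
each step, the total conditional entropy `H(z n, h)` is nonpositive. -/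
theorem zigzag_telescope {W : Type*} [Lattice W]
    (F : W → ℝ)
    (hsub : ∀ x y : W, F (x ⊔ y) + F (x ⊓ y) ≤ F x + F y)
    (H : W → W → ℝ) (hH : ∀ b a : W, H b a = F b - F a)
    (n : ℕ) (z : ℕ → W)
    (hchain : ∀ k, k < n → z k ≤ z (k + 1))
    (h : W) (h0 : z 0 ≤ h) (hn : h ≤ z n)
    (hstep : ∀ k, 1 ≤ k → k ≤ n → H (z k) ((h ⊓ z k) ⊔ z (k - 1)) ≤ 0) :
    H (z n) h ≤ 0 := by
  have key : ∀ k, k ≤ n → F (z k) - F (h ⊓ z k) ≤ 0 := by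
    intro k
    induction k with
    | zero =>
      intro _
      rw [inf_eq_right.mpr h0]
      simp
    | succ m ih =>
      intro hk
      have hm : m ≤ n := Nat.le_of_succ_le hk
      have h1 := hstep (m + 1) (Nat.succ_le_succ (Nat.zero_le m)) hk
      rw [hH] at h1
      simp only [Nat.add_sub_cancel] at h1
      have h2 := hsub (h ⊓ z (m + 1)) (z m)
      have hle : z m ≤ z (m + 1) := hchain m (Nat.lt_of_succ_le hk)
      have hmeet : (h ⊓ z (m + 1)) ⊓ z m = h ⊓ z m := by
        rw [inf_assoc, inf_eq_right.mpr hle]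
      rw [hmeet] at h2
      linarith [ih hm]
  have hfin := key n le_rfl
  rw [inf_eq_left.mpr hn] at hfin
  rw [hH]
  linarith
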